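/- (Theorem 2, abstract form) Let p ≥ 2, n ≥ 1, σ > 0, ζ > 0, r̃ > 0, β̃ > 0, c̃₀ ≥ 2. Let θ*_s ∈ ℝ^{p−1} with support S and sparsity s₀ = ‖θ*_s‖₀ ≥ 1. On a probability space, for each coordinate t let A_t^{(1)},…,A_t^{(n)} and B_t^{(1)},…,B_t^{(n)} be families of i.i.d. zero-mean random variables each satisfying the (σ,ζ)-MGF bound E[exp(η·)] ≤ exp(σ²η²/2) for |η| ≤ ζ. Suppose that for every outcome ω there is a convex, twice continuously differentiable function L̃_ω : ℝ^{p−1} → ℝ whose gradient at θ*_s has t-coordinate equal to (1/n) Σ_{i=1}^n ( −A_t^{(i)}(ω) + B_t^{(i)}(ω) ), and which satisfies the restricted positive definite Hessian condition with constants (r̃, β̃) on the cone C_S for all θ_s with ‖θ_s − θ*_s‖₂ < r̃. For each ω let γ̃_n(ω) = ‖∇L̃_ω(θ*_s)‖_∞, let λ(ω) ∈ [2γ̃_n(ω), c̃₀γ̃_n(ω)] with λ(ω) > 0, and let θ̂_s(ω) be a global minimizer of θ_s ↦ L̃_ω(θ_s) + λ(ω)‖θ_s‖₁. If n > max( 6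 ln p/(σ²ζ²), 54 c̃₀² r̃^{−2} β̃^{−2} σ² s₀ ln p ), then with probability at least 1 − 4p^{−2}, ‖θ̂_s − θ*_s‖₂ ≤ 3 c̃₀ β̃^{−1} σ √(6 s₀ ln p / n). -/

import Mathlib

/-!
Put `γ = σ √(6 ln p / n)`. A Chernoff bound at `η = γ / σ²`, which the first sample-size
condition keeps below `ζ`, shows that each of the `2 (p - 1)` centred sums `∑ᵢ A_t⁽ⁱ⁾`,
`∑ᵢ B_t⁽ⁱ⁾` exceeds `n γ` in absolute value with probability at most `2 p⁻³`. By a union bound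
all of them stay below `n γ` with probability at least `1 - 4 p⁻²`, and on that event the
gradient formula gives `γ̃_n ≤ 2 γ`, hence `λ ≤ 2 c̃₀ γ`.

The rest is deterministic. For `Δ = θ̂ - θ*`, first-order optimality of `θ̂` for the
ℓ₁-penalised problem and `λ ≥ 2 γ̃_n` give
`⟨∇L̃(θ̂) - ∇L̃(θ*), Δ⟩ ≤ λ (3/2 ‖Δ_S‖₁ - 1/2 ‖Δ_S̄‖₁)`. The gradient of the convex `L̃` is
monotone, so the left side is nonnegative, hence `Δ ∈ C_S`, and by Cauchy–Schwarz it is at most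
`3/2 λ √s₀ ‖Δ‖₂`. If `‖Δ‖₂` exceeded `3 λ √s₀ / (2 β̃)`, rescale `Δ` to a norm `ρ` between that
value and `r̃` (the second sample-size condition makes room): integrating the restricted Hessian
bound along the segment gives `β̃ ρ² ≤ 3/2 λ √s₀ ρ`, a contradiction.
-/

open MeasureTheory ProbabilityTheory Real

section LineRestriction

variable {E F : Type*} [NormedAddCommGroup E] [NormedSpace ℝ E]
  [NormedAddCommGroup F] [NormedSpace ℝ F]

theorem hasDerivAt_comp_add_smul {f : E → F} (x d : E) {u : ℝ}
    (hf : DifferentiableAt ℝ f (x + u • d)) :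
    HasDerivAt (fun u : ℝ => f (x + u • d)) (fderiv ℝ f (x + u • d) d) u := by
  have hline : HasDerivAt (fun u : ℝ => x + u • d) d u := by
    simpa using ((hasDerivAt_id u).smul_const d).const_add x
  exact hf.hasFDerivAt.comp_hasDerivAt u hline

theorem hasDerivAt_fderiv_comp_add_smul {f : E → ℝ} (x d : E) {u : ℝ}
    (hf : DifferentiableAt ℝ (fderiv ℝ f) (x + u • d)) :
    HasDerivAt (fun u : ℝ => fderiv ℝ f (x + u • d) d)
      (fderiv ℝ (fderiv ℝ f) (x + u • d) d d) u :=
  (ContinuousLinearMap.apply ℝ ℝ d).hasFDerivAt.comp_hasDerivAt u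
    (hasDerivAt_comp_add_smul x d hf)

theorem ConvexOn.comp_add_smul {f : E → ℝ} (hf : ConvexOn ℝ Set.univ f) (x d : E) :
    ConvexOn ℝ Set.univ fun u : ℝ => f (x + u • d) := by
  simpa [Function.comp_def] using
    (hf.translate_right x).comp_linearMap ((LinearMap.id : ℝ →ₗ[ℝ] ℝ).smulRight d)

theorem ConvexOn.monotone_fderiv_add_smul {f : E → ℝ} (hconv : ConvexOn ℝ Set.univ f)
    (hf : Differentiable ℝ f) (x d : E) :
    Monotone fun u : ℝ => fderiv ℝ f (x + u • d) d := by
  intro a b hab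
  have hderiv := fun u : ℝ => hasDerivAt_comp_add_smul x d (hf (x + u • d))
  simpa only [(hderiv _).deriv] using (hconv.comp_add_smul x d).monotoneOn_deriv
    (fun u _ => (hderiv u).differentiableAt) (Set.mem_univ a) (Set.mem_univ b) hab

theorem IsMinOn.sub_le_fderiv_of_convexOn_add {f g : E → ℝ} {x : E}
    (hmin : IsMinOn (f + g) Set.univ x) (hf : DifferentiableAt ℝ f x)
    (hg : ConvexOn ℝ Set.univ g) (y : E) :
    g x - g y ≤ fderiv ℝ f x (y - x) := by
  -- By convexity of `g`, `h` is minimal on `[0, 1]` at `0`; Fermat's rule there is the claim.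
  set h : ℝ → ℝ := fun u => f (x + u • (y - x)) - u * (g x - g y)
  have hmin_h : IsMinOn h (Set.Icc 0 1) 0 := by
    intro u ⟨hu0, hu1⟩
    have hseg : x + u • (y - x) = (1 - u) • x + u • y := by module
    have hconv := hg.2 (Set.mem_univ x) (Set.mem_univ y) (sub_nonneg.2 hu1) hu0
      (sub_add_cancel 1 u)
    have hxu : f x + g x ≤ f (x + u • (y - x)) + g (x + u • (y - x)) :=
      hmin (Set.mem_univ _)
    change f (x + (0 : ℝ) • (y - x)) - 0 * (g x - g y) ≤ f (x + u • (y - x)) - u * (g x - g y)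
    rw [hseg] at hxu ⊢
    simp only [zero_smul, add_zero, zero_mul, sub_zero, smul_eq_mul] at hxu hconv ⊢
    nlinarith
  have hderiv : HasDerivAt h (fderiv ℝ f x (y - x) - (g x - g y)) 0 := by
    refine HasDerivAt.sub ?_ (by simpa using (hasDerivAt_id (0 : ℝ)).mul_const (g x - g y))
    simpa only [zero_smul, add_zero] using
      hasDerivAt_comp_add_smul x (y - x) (u := 0) (by simpa using hf)
  have hcone : (1 : ℝ) ∈ posTangentConeAt (Set.Icc 0 1) (0 : ℝ) :=
    mem_posTangentConeAt_of_segment_subset (by simp [segment_eq_Icc])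
  have := hmin_h.localize.hasFDerivWithinAt_nonneg
    hderiv.hasFDerivAt.hasFDerivWithinAt hcone
  simpa using this

end LineRestriction

section L1Cone

open Finset

variable {ι : Type*} [Fintype ι]

theorem convexOn_sum_abs : ConvexOn ℝ Set.univ fun θ : ι → ℝ => ∑ t, |θ t| := by
  refine ⟨convex_univ, fun x _ y _ a b ha hb _ => ?_⟩
  simp only [Pi.add_apply, Pi.smul_apply, smul_eq_mul, mul_sum, ← sum_add_distrib]
  gcongr with t
  calc |a * x t + b * y t| ≤ |a * x t| + |b * y t| := abs_add_le _ _
    _ = a * |x t| + b * |y t| := by rw [abs_mul, abs_mul, abs_of_nonneg ha, abs_of_nonneg hb]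

theorem sqrt_sum_sq_smul (c : ℝ) (v : ι → ℝ) :
    √(∑ t, (c • v) t ^ 2) = |c| * √(∑ t, v t ^ 2) := by
  simp only [Pi.smul_apply, smul_eq_mul, mul_pow, ← mul_sum]
  rw [sqrt_mul (sq_nonneg c), sqrt_sq_eq_abs]

theorem sum_abs_le_sqrt_card_mul_sqrt_sum_sq (S : Finset ι) (v : ι → ℝ) :
    ∑ t ∈ S, |v t| ≤ √(#S) * √(∑ t, v t ^ 2) := by
  have hcs : (∑ t ∈ S, |v t|) ^ 2 ≤ #S * ∑ t ∈ S, |v t| ^ 2 := sq_sum_le_card_mul_sum_sq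
  have hsub : ∑ t ∈ S, |v t| ^ 2 ≤ ∑ t, v t ^ 2 := by
    simp only [sq_abs]
    exact sum_le_sum_of_subset_of_nonneg (subset_univ S) fun t _ _ => sq_nonneg _
  rw [← sqrt_mul (Nat.cast_nonneg _)]
  exact Real.le_sqrt_of_sq_le (hcs.trans (by gcongr))

variable [DecidableEq ι]

def InCone (S : Finset ι) (v : ι → ℝ) : Prop :=
  ∑ t ∈ Sᶜ, |v t| ≤ 3 * ∑ t ∈ S, |v t|

theorem InCone.smul {S : Finset ι} {v : ι → ℝ} (hv : InCone S v) {c : ℝ} (hc : 0 ≤ c) :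
    InCone S (c • v) := by
  unfold InCone at hv ⊢
  simp only [Pi.smul_apply, smul_eq_mul, abs_mul, abs_of_nonneg hc, ← mul_sum]
  linarith [mul_le_mul_of_nonneg_left hv hc]

theorem sum_abs_sub_sum_abs_le {S : Finset ι} {θstar : ι → ℝ} (hS : ∀ t ∉ S, θstar t = 0)
    (θ : ι → ℝ) :
    ∑ t, |θstar t| - ∑ t, |θ t| ≤
      ∑ t ∈ S, |θ t - θstar t| - ∑ t ∈ Sᶜ, |θ t - θstar t| := by
  have hout : ∀ t ∈ Sᶜ, θstar t = 0 := fun t ht => hS t (mem_compl.1 ht)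
  have hin : ∑ t ∈ S, |θstar t| - ∑ t ∈ S, |θ t| ≤ ∑ t ∈ S, |θ t - θstar t| := by
    rw [← sum_sub_distrib]
    gcongr with t
    rw [abs_sub_comm]
    exact abs_sub_abs_le_abs_sub _ _
  have hstar : ∑ t ∈ Sᶜ, |θstar t| = 0 := sum_eq_zero fun t ht => by rw [hout t ht, abs_zero]
  have hθ : ∑ t ∈ Sᶜ, |θ t| = ∑ t ∈ Sᶜ, |θ t - θstar t| :=
    sum_congr rfl fun t ht => by rw [hout t ht, sub_zero]
  rw [← sum_add_sum_compl S, ← sum_add_sum_compl S fun t => |θ t|, hstar, hθ]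
  linarith

theorem abs_fderiv_le_mul_sum_abs (L : (ι → ℝ) → ℝ) (x v : ι → ℝ) {γ : ℝ}
    (hγ : ∀ t, |fderiv ℝ L x (Pi.single t 1)| ≤ γ) :
    |fderiv ℝ L x v| ≤ γ * ∑ t, |v t| := by
  have hv : v = ∑ t, v t • Pi.single t (1 : ℝ) := by ext j; simp [Pi.single_apply]
  conv_lhs => rw [hv, map_sum]
  rw [mul_sum]
  refine (abs_sum_le_sum_abs _ _).trans (sum_le_sum fun t _ => ?_)
  rw [map_smul, smul_eq_mul, abs_mul, mul_comm]
  exact mul_le_mul_of_nonneg_right (hγ t) (abs_nonneg _)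

end L1Cone

section RestrictedHessian

open Finset

variable {ι : Type*} [Fintype ι] [DecidableEq ι]

def RestrictedHessianPosDef (L : (ι → ℝ) → ℝ) (θstar : ι → ℝ) (S : Finset ι) (r β : ℝ) :
    Prop :=
  ∀ θ : ι → ℝ, √(∑ t, (θ t - θstar t) ^ 2) < r →
    ∀ v : ι → ℝ, InCone S v → β * ∑ t, v t ^ 2 ≤ fderiv ℝ (fderiv ℝ L) θ v v

variable {L : (ι → ℝ) → ℝ} {θstar : ι → ℝ} {S : Finset ι} {r β : ℝ}

theorem RestrictedHessianPosDef.mul_sum_sq_le_fderiv_sub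
    (hRSC : RestrictedHessianPosDef L θstar S r β) (hL : ContDiff ℝ 2 L) {v : ι → ℝ}
    (hv : InCone S v) (hvr : √(∑ t, v t ^ 2) < r) :
    β * ∑ t, v t ^ 2 ≤ fderiv ℝ L (θstar + v) v - fderiv ℝ L θstar v := by
  have hL' : Differentiable ℝ (fderiv ℝ L) :=
    (hL.fderiv_right (m := 1) le_rfl).differentiable one_ne_zero
  have hderiv := fun u : ℝ =>
    hasDerivAt_fderiv_comp_add_smul (f := L) θstar v (hL' (θstar + u • v))
  obtain ⟨ξ, ⟨hξ0, hξ1⟩, hξ⟩ := exists_hasDerivAt_eq_slope _ _ zero_lt_one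
    (fun u _ => (hderiv u).continuousAt.continuousWithinAt) (fun u _ => hderiv u)
  have hdist : √(∑ t, ((θstar + ξ • v) t - θstar t) ^ 2) < r := by
    simp only [Pi.add_apply, add_sub_cancel_left]
    rw [sqrt_sum_sq_smul, abs_of_pos hξ0]
    nlinarith [sqrt_nonneg (∑ t, v t ^ 2)]
  simpa [hξ] using hRSC _ hdist v hv

theorem RestrictedHessianPosDef.sqrt_sum_sq_le_of_fderiv_sub_le
    (hRSC : RestrictedHessianPosDef L θstar S r β) (hconv : ConvexOn ℝ Set.univ L)
    (hL : ContDiff ℝ 2 L) (hβ : 0 < β) {Δ : ι → ℝ} (hΔ : InCone S Δ) {K : ℝ} (hK0 : 0 ≤ K)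
    (hKr : K / β < r)
    (hgap : fderiv ℝ L (θstar + Δ) Δ - fderiv ℝ L θstar Δ ≤ K * √(∑ t, Δ t ^ 2)) :
    √(∑ t, Δ t ^ 2) ≤ K / β := by
  set g : ℝ → ℝ := fun u => fderiv ℝ L (θstar + u • Δ) Δ
  have hmono : Monotone g :=
    hconv.monotone_fderiv_add_smul (hL.differentiable two_ne_zero) θstar Δ
  have hg0 : fderiv ℝ L θstar Δ = g 0 := by simp [g]
  have hg1 : g 1 - g 0 ≤ K * √(∑ t, Δ t ^ 2) := by simpa [g] using hgap
  by_contra! hlt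
  obtain ⟨ρ, hKρ, hρ⟩ := exists_between (lt_min hKr hlt)
  obtain ⟨hρr, hρΔ⟩ := lt_min_iff.1 hρ
  have hρ0 : 0 < ρ := lt_of_le_of_lt (by positivity) hKρ
  have hnΔ : 0 < √(∑ t, Δ t ^ 2) := hρ0.trans hρΔ
  set τ := ρ / √(∑ t, Δ t ^ 2)
  have hτ0 : 0 ≤ τ := by positivity
  have hτρ : τ * √(∑ t, Δ t ^ 2) = ρ := div_mul_cancel₀ _ hnΔ.ne'
  have hτΔ : √(∑ t, (τ • Δ) t ^ 2) = ρ := by rw [sqrt_sum_sq_smul, abs_of_nonneg hτ0, hτρ]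
  have hstrong := hRSC.mul_sum_sq_le_fderiv_sub hL (hΔ.smul hτ0) (hτΔ ▸ hρr)
  rw [← sq_sqrt (sum_nonneg fun t _ => sq_nonneg ((τ • Δ) t)), hτΔ, map_smul, map_smul,
    smul_eq_mul, smul_eq_mul, ← mul_sub, hg0] at hstrong
  change β * ρ ^ 2 ≤ τ * (g τ - g 0) at hstrong
  have hupper : τ * (g τ - g 0) ≤ K * ρ := by
    rw [← hτρ]
    nlinarith [hmono ((div_le_one hnΔ).2 hρΔ.le)]
  nlinarith [mul_lt_mul_of_pos_left ((div_lt_iff₀ hβ).1 hKρ) hρ0]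

end RestrictedHessian

section L1Penalized

open Finset

variable {ι : Type*} [Fintype ι] [DecidableEq ι] {L : (ι → ℝ) → ℝ} {θstar θhat : ι → ℝ}
  {S : Finset ι} {γ lam : ℝ}

theorem fderiv_sub_fderiv_le_of_isMin_l1_penalized (hL : Differentiable ℝ L)
    (hS : ∀ t ∉ S, θstar t = 0) (hlam : 0 ≤ lam)
    (hgrad : ∀ t, |fderiv ℝ L θstar (Pi.single t 1)| ≤ γ) (hγ : 2 * γ ≤ lam)
    (hmin : ∀ θ, L θhat + lam * ∑ t, |θhat t| ≤ L θ + lam * ∑ t, |θ t|) :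
    fderiv ℝ L θhat (θhat - θstar) - fderiv ℝ L θstar (θhat - θstar) ≤
      lam * (3 / 2 * ∑ t ∈ S, |θhat t - θstar t| - 1 / 2 * ∑ t ∈ Sᶜ, |θhat t - θstar t|) := by
  have hopt := IsMinOn.sub_le_fderiv_of_convexOn_add (f := L) (g := fun θ => lam * ∑ t, |θ t|)
    (fun θ _ => hmin θ) (hL θhat) (convexOn_sum_abs.smul hlam) θstar
  rw [← neg_sub θhat θstar, map_neg] at hopt
  have hl1 := mul_le_mul_of_nonneg_left (sum_abs_sub_sum_abs_le hS θhat) hlam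
  have hgradΔ := abs_fderiv_le_mul_sum_abs L θstar (θhat - θstar) hgrad
  rw [← sum_add_sum_compl S] at hgradΔ
  have hγ' : γ * (∑ t ∈ S, |(θhat - θstar) t| + ∑ t ∈ Sᶜ, |(θhat - θstar) t|) ≤
      lam / 2 * (∑ t ∈ S, |(θhat - θstar) t| + ∑ t ∈ Sᶜ, |(θhat - θstar) t|) :=
    mul_le_mul_of_nonneg_right (by linarith) (by positivity)
  simp only [Pi.sub_apply] at hopt hgradΔ hγ' ⊢
  linarith [(abs_le.1 hgradΔ).1]

variable {r β : ℝ}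

theorem sqrt_sum_sq_sub_le_of_isMin_l1_penalized (hconv : ConvexOn ℝ Set.univ L)
    (hL : ContDiff ℝ 2 L) (hRSC : RestrictedHessianPosDef L θstar S r β)
    (hS : ∀ t ∉ S, θstar t = 0) (hβ : 0 < β) (hlam : 0 < lam)
    (hgrad : ∀ t, |fderiv ℝ L θstar (Pi.single t 1)| ≤ γ) (hγ : 2 * γ ≤ lam)
    (hmin : ∀ θ, L θhat + lam * ∑ t, |θhat t| ≤ L θ + lam * ∑ t, |θ t|)
    (hr : 3 * lam * √(#S) / (2 * β) < r) :
    √(∑ t, (θhat t - θstar t) ^ 2) ≤ 3 * lam * √(#S) / (2 * β) := by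
  have hL1 : Differentiable ℝ L := hL.differentiable two_ne_zero
  set Δ := θhat - θstar
  have hθhat : θstar + Δ = θhat := add_sub_cancel θstar θhat
  have hgap := fderiv_sub_fderiv_le_of_isMin_l1_penalized hL1 hS hlam.le hgrad hγ hmin
  change fderiv ℝ L θhat Δ - fderiv ℝ L θstar Δ ≤
    lam * (3 / 2 * ∑ t ∈ S, |Δ t| - 1 / 2 * ∑ t ∈ Sᶜ, |Δ t|) at hgap
  have hmono := hconv.monotone_fderiv_add_smul hL1 θstar Δ zero_le_one
  simp only [zero_smul, add_zero, one_smul, hθhat] at hmono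
  have hcone : InCone S Δ := le_of_mul_le_mul_left (by nlinarith) hlam
  have hCS := sum_abs_le_sqrt_card_mul_sqrt_sum_sq S Δ
  rw [show 3 * lam * √(#S) / (2 * β) = 3 / 2 * lam * √(#S) / β by ring] at hr ⊢
  refine hRSC.sqrt_sum_sq_le_of_fderiv_sub_le hconv hL hβ hcone (by positivity) hr ?_
  rw [hθhat]
  nlinarith [sum_nonneg fun t (_ : t ∈ Sᶜ) => abs_nonneg (Δ t)]

end L1Penalized

theorem natCast_mul_exp_neg_three_log_le {m p : ℕ} (hp : 0 < p) (hm : m ≤ 2 * p) :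
    (m : ENNReal) * (2 * ENNReal.ofReal (exp (-(3 * log p)))) ≤ 4 * ((p : ENNReal) ^ 2)⁻¹ := by
  have hp0 : (p : ENNReal) ≠ 0 := by exact_mod_cast hp.ne'
  have hexp : ENNReal.ofReal (exp (-(3 * log p))) = ((p : ENNReal) ^ 3)⁻¹ := by
    rw [exp_neg, show 3 * log (p : ℝ) = log ((p : ℝ) ^ 3) by rw [log_pow]; norm_num,
      exp_log (by positivity), ENNReal.ofReal_inv_of_pos (by positivity),
      ENNReal.ofReal_pow (Nat.cast_nonneg _), ENNReal.ofReal_natCast]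
  rw [hexp]
  calc (m : ENNReal) * (2 * ((p : ENNReal) ^ 3)⁻¹) ≤ 2 * p * (2 * ((p : ENNReal) ^ 3)⁻¹) := by
        gcongr
        exact_mod_cast hm
    _ = 4 * ((p : ENNReal) * ((p : ENNReal) ^ 3)⁻¹) := by ring
    _ = 4 * ((p : ENNReal) ^ 2)⁻¹ := by
      rw [pow_succ' _ 2, ENNReal.mul_inv (by simp [hp0]) (by simp), ← mul_assoc (p : ENNReal),
        ENNReal.mul_inv_cancel hp0 (by simp), one_mul]

section Concentration

variable {Ω : Type*} [MeasurableSpace Ω]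

-- Integrability is part of the condition: `mgf X P η` is `0` when `exp (η * X)` is not integrable.
def HasMGFBound (X : Ω → ℝ) (P : Measure Ω) (σ ζ : ℝ) : Prop :=
  ∀ η : ℝ, |η| ≤ ζ →
    Integrable (fun ω => exp (η * X ω)) P ∧ mgf X P η ≤ exp (σ ^ 2 * η ^ 2 / 2)

variable {P : Measure Ω}

theorem HasMGFBound.neg {X : Ω → ℝ} {σ ζ : ℝ} (hX : HasMGFBound X P σ ζ) :
    HasMGFBound (-X) P σ ζ := by
  intro η hη
  obtain ⟨hint, hmgf⟩ := hX (-η) (by rwa [abs_neg])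
  refine ⟨by simpa using hint, ?_⟩
  rw [mgf_neg]
  rwa [neg_sq] at hmgf

variable [IsProbabilityMeasure P]

theorem one_sub_card_mul_le_measure_iInter {κ : Type*} [Fintype κ] {E : κ → Set Ω}
    {δ : ENNReal} (hE : ∀ k, P (E k)ᶜ ≤ δ) :
    1 - Fintype.card κ * δ ≤ P (⋂ k, E k) := by
  have hcompl : P (⋂ k, E k)ᶜ ≤ Fintype.card κ * δ := by
    rw [Set.compl_iInter]
    calc P (⋃ k, (E k)ᶜ) ≤ ∑ k, P (E k)ᶜ := measure_iUnion_fintype_le P _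
      _ ≤ ∑ _k : κ, δ := Finset.sum_le_sum fun k _ => hE k
      _ = Fintype.card κ * δ := by rw [Finset.sum_const, nsmul_eq_mul, Finset.card_univ]
  have hone : 1 ≤ P (⋂ k, E k) + P (⋂ k, E k)ᶜ := by
    rw [← measure_univ (μ := P), ← Set.union_compl_self (⋂ k, E k)]
    exact measure_union_le _ _
  rw [tsub_le_iff_right]
  exact hone.trans (add_le_add le_rfl hcompl)

variable {ι : Type*} [Fintype ι] {σ ζ γ : ℝ}

theorem measure_card_mul_le_sum_le {X : ι → Ω → ℝ} (hmeas : ∀ i, Measurable (X i))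
    (hindep : iIndepFun X P) (hX : ∀ i, HasMGFBound (X i) P σ ζ) (hσ : σ ≠ 0) (hγ0 : 0 ≤ γ)
    (hγ : γ ≤ σ ^ 2 * ζ) :
    P {ω | Fintype.card ι * γ ≤ ∑ i, X i ω} ≤
      ENNReal.ofReal (exp (-(Fintype.card ι * γ ^ 2 / (2 * σ ^ 2)))) := by
  set η := γ / σ ^ 2
  have hη0 : 0 ≤ η := by positivity
  have hηζ : |η| ≤ ζ := by
    rw [abs_of_nonneg hη0, div_le_iff₀ (by positivity)]
    linarith
  have hmgf : mgf (∑ i, X i) P η ≤ exp (σ ^ 2 * η ^ 2 / 2) ^ Fintype.card ι := by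
    rw [hindep.mgf_sum hmeas, ← Finset.card_univ, ← Finset.prod_const]
    exact Finset.prod_le_prod (fun i _ => mgf_nonneg) fun i _ => (hX i η hηζ).2
  have hchernoff := measure_ge_le_exp_mul_mgf (X := ∑ i, X i) (μ := P) (Fintype.card ι * γ) hη0
    (hindep.integrable_exp_mul_sum hmeas (s := Finset.univ) fun i _ => (hX i η hηζ).1)
  rw [← exp_nat_mul] at hmgf
  have hexp : exp (-η * (Fintype.card ι * γ)) * exp (Fintype.card ι * (σ ^ 2 * η ^ 2 / 2)) =
      exp (-(Fintype.card ι * γ ^ 2 / (2 * σ ^ 2))) := by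
    rw [← exp_add]
    congr 1
    simp only [η]
    field_simp
    ring
  rw [ENNReal.le_ofReal_iff_toReal_le (measure_ne_top _ _) (exp_nonneg _), ← hexp]
  simp only [Finset.sum_apply] at hchernoff
  exact hchernoff.trans (mul_le_mul_of_nonneg_left hmgf (exp_nonneg _))

theorem measure_card_mul_lt_abs_sum_le {X : ι → Ω → ℝ} (hmeas : ∀ i, Measurable (X i))
    (hindep : iIndepFun X P) (hX : ∀ i, HasMGFBound (X i) P σ ζ) (hσ : σ ≠ 0) (hγ0 : 0 ≤ γ)
    (hγ : γ ≤ σ ^ 2 * ζ) :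
    P {ω | Fintype.card ι * γ < |∑ i, X i ω|} ≤
      2 * ENNReal.ofReal (exp (-(Fintype.card ι * γ ^ 2 / (2 * σ ^ 2)))) := by
  have hneg := measure_card_mul_le_sum_le (X := fun i => -X i) (fun i => (hmeas i).neg)
    (hindep.comp (fun _ => Neg.neg) fun _ => measurable_neg) (fun i => (hX i).neg) hσ hγ0 hγ
  have hsub : {ω | Fintype.card ι * γ < |∑ i, X i ω|} ⊆
      {ω | Fintype.card ι * γ ≤ ∑ i, X i ω} ∪ {ω | Fintype.card ι * γ ≤ ∑ i, (-X i) ω} := by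
    intro ω hω
    rcases lt_abs.1 (show Fintype.card ι * γ < |∑ i, X i ω| from hω) with h | h
    · exact Or.inl h.le
    · right
      simpa [Finset.sum_neg_distrib] using h.le
  calc _ ≤ _ := measure_mono hsub
    _ ≤ _ := measure_union_le _ _
    _ ≤ _ := add_le_add (measure_card_mul_le_sum_le hmeas hindep hX hσ hγ0 hγ) hneg
    _ = _ := (two_mul _).symm

theorem one_sub_le_measure_forall_abs_sum_le {κ : Type*} [Fintype κ] {X : κ → ι → Ω → ℝ}
    (hmeas : ∀ k i, Measurable (X k i)) (hindep : ∀ k, iIndepFun (X k) P)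
    (hX : ∀ k i, HasMGFBound (X k i) P σ ζ) (hσ : σ ≠ 0) (hγ0 : 0 ≤ γ) (hγ : γ ≤ σ ^ 2 * ζ) :
    1 - Fintype.card κ * (2 * ENNReal.ofReal (exp (-(Fintype.card ι * γ ^ 2 / (2 * σ ^ 2))))) ≤
      P {ω | ∀ k, |∑ i, X k i ω| ≤ Fintype.card ι * γ} := by
  rw [Set.ofPred_forall]
  refine one_sub_card_mul_le_measure_iInter fun k => ?_
  simpa only [Set.compl_ofPred, not_le] using
    measure_card_mul_lt_abs_sum_le (hmeas k) (hindep k) (hX k) hσ hγ0 hγ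

theorem one_sub_four_mul_inv_sq_le_measure_forall_abs_sum_le {κ : Type*} [Fintype κ] {p n : ℕ}
    (hp : 0 < p)
    (hκ : Fintype.card κ ≤ 2 * p) {X : κ → Fin n → Ω → ℝ}
    (hmeas : ∀ k i, Measurable (X k i)) (hindep : ∀ k, iIndepFun (X k) P)
    (hX : ∀ k i, HasMGFBound (X k i) P σ ζ) (hσ : 0 < σ) (hζ : 0 < ζ) (hn : 0 < n)
    (hn1 : 6 * log p / (σ ^ 2 * ζ ^ 2) < n) :
    1 - 4 * ((p : ENNReal) ^ 2)⁻¹ ≤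
      P {ω | ∀ k, |∑ i, X k i ω| ≤ n * (σ * √(6 * log p / n))} := by
  have hn0 : (0 : ℝ) < n := by exact_mod_cast hn
  have hlogp := log_natCast_nonneg p
  have hεsq : √(6 * log p / n) ^ 2 = 6 * log p / n := sq_sqrt (by positivity)
  have hεζ : σ * √(6 * log p / n) ≤ σ ^ 2 * ζ := by
    rw [sq, mul_assoc]
    refine mul_le_mul_of_nonneg_left ((sqrt_le_left (by positivity)).2 ?_) hσ.le
    rw [div_le_iff₀ hn0]
    nlinarith [(div_lt_iff₀ (by positivity)).1 hn1]
  have hexp : (n : ℝ) * (σ * √(6 * log p / n)) ^ 2 / (2 * σ ^ 2) = 3 * log p := by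
    rw [mul_pow, hεsq]
    field_simp
    ring
  have := one_sub_le_measure_forall_abs_sum_le hmeas hindep hX hσ.ne' (by positivity) hεζ
  rw [Fintype.card_fin, hexp] at this
  exact (tsub_le_tsub_left (natCast_mul_exp_neg_three_log_le hp hκ) 1).trans this

end Concentration

theorem abs_one_div_mul_sum_neg_add_le {n : ℕ} (hn : 0 < n) {a b : Fin n → ℝ} {γ : ℝ}
    (ha : |∑ i, a i| ≤ n * γ) (hb : |∑ i, b i| ≤ n * γ) :
    |(1 / n : ℝ) * ∑ i, (-a i + b i)| ≤ 2 * γ := by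
  have hn' : (0 : ℝ) < n := by exact_mod_cast hn
  rw [Finset.sum_add_distrib, Finset.sum_neg_distrib, abs_mul, abs_of_pos (by positivity),
    div_mul_eq_mul_div, one_mul, div_le_iff₀ hn']
  calc |-∑ i, a i + ∑ i, b i| ≤ |∑ i, a i| + |∑ i, b i| := by
        simpa only [abs_neg] using abs_add_le (-∑ i, a i) (∑ i, b i)
    _ ≤ 2 * γ * n := by linarith

theorem three_mul_mul_sqrt_div_le_of_le {lam c β σ s x n : ℝ} (hβ : 0 < β) (hs : 0 ≤ s)
    (hlam : lam ≤ c * (2 * (σ * √(6 * x / n)))) :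
    3 * lam * √s / (2 * β) ≤ 3 * c * β⁻¹ * σ * √(6 * s * x / n) := by
  rw [show 6 * s * x / n = s * (6 * x / n) by ring, sqrt_mul hs, div_le_iff₀ (by positivity)]
  field_simp
  nlinarith [sqrt_nonneg s]

theorem mul_sqrt_lt_of_mul_inv_sq_mul_lt {c r x n : ℝ} (hc : 0 ≤ c) (hr : 0 < r) (hn : 0 < n)
    (h : c ^ 2 * r⁻¹ ^ 2 * x < n) : c * √(x / n) < r := by
  rw [← sqrt_sq hc, ← sqrt_mul (sq_nonneg _), sqrt_lt' hr, ← mul_div_assoc, div_lt_iff₀ hn]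
  calc c ^ 2 * x = r ^ 2 * (c ^ 2 * r⁻¹ ^ 2 * x) := by field_simp
    _ < r ^ 2 * n := by gcongr

theorem stmt_15_general {Ω : Type*} [MeasurableSpace Ω] (P : Measure Ω) [IsProbabilityMeasure P]
    (p n : ℕ) (hp : 2 ≤ p) (hn : 0 < n)
    (σ ζ rt βt c₀ : ℝ) (hσ : 0 < σ) (hζ : 0 < ζ) (hrt : 0 < rt) (hβt : 0 < βt)
    (hc₀ : 2 ≤ c₀)
    (θstar : Fin (p - 1) → ℝ)
    (S : Finset (Fin (p - 1))) (hS : S = Finset.univ.filter (fun t => θstar t ≠ 0))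
    (s₀ : ℕ) (hs₀def : s₀ = S.card)
    (A B : Fin (p - 1) → Fin n → Ω → ℝ)
    (hmeasA : ∀ t i, Measurable (A t i)) (hmeasB : ∀ t i, Measurable (B t i))
    (hindepA : ∀ t, iIndepFun (A t) P)
    (hindepB : ∀ t, iIndepFun (B t) P)
    (hintA : ∀ t i, ∀ η : ℝ, |η| ≤ ζ →
      Integrable (fun ω => Real.exp (η * A t i ω)) P)
    (hintB : ∀ t i, ∀ η : ℝ, |η| ≤ ζ →
      Integrable (fun ω => Real.exp (η * B t i ω)) P)
    (hmgfA : ∀ t i, ∀ η : ℝ, |η| ≤ ζ →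
      ∫ ω, Real.exp (η * A t i ω) ∂P ≤ Real.exp (σ ^ 2 * η ^ 2 / 2))
    (hmgfB : ∀ t i, ∀ η : ℝ, |η| ≤ ζ →
      ∫ ω, Real.exp (η * B t i ω) ∂P ≤ Real.exp (σ ^ 2 * η ^ 2 / 2))
    (Lt : Ω → (Fin (p - 1) → ℝ) → ℝ)
    (hconv : ∀ ω, ConvexOn ℝ Set.univ (Lt ω))
    (hsmooth : ∀ ω, ContDiff ℝ 2 (Lt ω))
    (hgrad : ∀ ω t, fderiv ℝ (Lt ω) θstar (Pi.single t 1) =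
      (1 / n : ℝ) * ∑ i, (-(A t i ω) + B t i ω))
    (hRSC : ∀ ω, ∀ θ : Fin (p - 1) → ℝ,
      Real.sqrt (∑ t, (θ t - θstar t) ^ 2) < rt →
      ∀ v : Fin (p - 1) → ℝ, (∑ t ∈ Sᶜ, |v t|) ≤ 3 * ∑ t ∈ S, |v t| →
        βt * ∑ t, (v t) ^ 2 ≤ fderiv ℝ (fderiv ℝ (Lt ω)) θ v v)
    (γn : Ω → ℝ) (hγn : ∀ ω, γn ω = ⨆ t, |fderiv ℝ (Lt ω) θstar (Pi.single t 1)|)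
    (lam : Ω → ℝ) (hlam_pos : ∀ ω, 0 < lam ω)
    (hlam : ∀ ω, 2 * γn ω ≤ lam ω ∧ lam ω ≤ c₀ * γn ω)
    (θhat : Ω → Fin (p - 1) → ℝ)
    (hmin : ∀ ω θ, Lt ω (θhat ω) + lam ω * ∑ t, |θhat ω t| ≤
      Lt ω θ + lam ω * ∑ t, |θ t|)
    (hn1 : 6 * Real.log p / (σ ^ 2 * ζ ^ 2) < n)
    (hn2 : 54 * c₀ ^ 2 * rt⁻¹ ^ 2 * βt⁻¹ ^ 2 * σ ^ 2 * s₀ * Real.log p < n) :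
    1 - 4 * ((p : ENNReal) ^ 2)⁻¹ ≤
      P {ω | Real.sqrt (∑ t, (θhat ω t - θstar t) ^ 2) ≤
        3 * c₀ * βt⁻¹ * σ * Real.sqrt (6 * s₀ * Real.log p / n)} := by
  have hgood := one_sub_four_mul_inv_sq_le_measure_forall_abs_sum_le (P := P) (X := Sum.elim A B)
    (by omega) (by simp only [Fintype.card_sum, Fintype.card_fin]; omega)
    (by rintro (t | t) <;> simp [hmeasA, hmeasB]) (by rintro (t | t) <;> simp [hindepA, hindepB])
    (by rintro (t | t) i η hη
        exacts [⟨hintA t i η hη, hmgfA t i η hη⟩, ⟨hintB t i η hη, hmgfB t i η hη⟩])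
    hσ hζ hn hn1
  refine hgood.trans (measure_mono fun ω hω => ?_)
  have : Nonempty (Fin (p - 1)) := ⟨⟨0, by omega⟩⟩
  have hγnω : γn ω ≤ 2 * (σ * √(6 * log p / n)) := by
    rw [hγn ω]
    refine ciSup_le fun t => ?_
    rw [hgrad]
    exact abs_one_div_mul_sum_neg_add_le hn (hω (.inl t)) (hω (.inr t))
  have hgrad_le : ∀ t, |fderiv ℝ (Lt ω) θstar (Pi.single t 1)| ≤ γn ω := fun t => by
    rw [hγn ω]
    exact le_ciSup (f := fun t => |fderiv ℝ (Lt ω) θstar (Pi.single t 1)|)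
      (Finite.bddAbove_range _) t
  have hrate : 3 * lam ω * √(S.card : ℝ) / (2 * βt) ≤
      3 * c₀ * βt⁻¹ * σ * √(6 * s₀ * log p / n) :=
    hs₀def ▸ three_mul_mul_sqrt_div_le_of_le hβt (Nat.cast_nonneg _)
      ((hlam ω).2.trans (mul_le_mul_of_nonneg_left hγnω (by linarith)))
  have hradius : 3 * c₀ * βt⁻¹ * σ * √(6 * s₀ * log p / n) < rt :=
    mul_sqrt_lt_of_mul_inv_sq_mul_lt (by positivity) hrt (by exact_mod_cast hn) (by linarith)
  exact (sqrt_sum_sq_sub_le_of_isMin_l1_penalized (hconv ω) (hsmooth ω) (hRSC ω)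
    (by simp [hS]) hβt (hlam_pos ω) hgrad_le (hlam ω).1 (hmin ω)
    (hrate.trans_lt hradius)).trans hrate

/-- (Theorem 2, abstract form) Estimation error of the ℓ₁-penalized node-conditional MLE:
with the (σ,ζ)-MGF bound on the per-coordinate i.i.d. gradient summands `A, B` and the
restricted positive definite Hessian condition, if
`n > max(6 ln p/(σ²ζ²), 54 c̃₀² r̃⁻² β̃⁻² σ² s₀ ln p)` then with probability at least
`1 - 4p⁻²`, `‖θ̂_s - θ*_s‖₂ ≤ 3 c̃₀ β̃⁻¹ σ √(6 s₀ ln p/n)`. -/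
theorem stmt_15 {Ω : Type*} [MeasurableSpace Ω] (P : Measure Ω) [IsProbabilityMeasure P]
    (p n : ℕ) (hp : 2 ≤ p) (hn : 0 < n)
    (σ ζ rt βt c₀ : ℝ) (hσ : 0 < σ) (hζ : 0 < ζ) (hrt : 0 < rt) (hβt : 0 < βt)
    (hc₀ : 2 ≤ c₀)
    (θstar : Fin (p - 1) → ℝ)
    (S : Finset (Fin (p - 1))) (hS : S = Finset.univ.filter (fun t => θstar t ≠ 0))
    (s₀ : ℕ) (hs₀def : s₀ = S.card) (hs₀ : 1 ≤ s₀)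
    (A B : Fin (p - 1) → Fin n → Ω → ℝ)
    (hmeasA : ∀ t i, Measurable (A t i)) (hmeasB : ∀ t i, Measurable (B t i))
    (hindepA : ∀ t, iIndepFun (A t) P)
    (hindepB : ∀ t, iIndepFun (B t) P)
    (hidentA : ∀ t i i', P.map (A t i) = P.map (A t i'))
    (hidentB : ∀ t i i', P.map (B t i) = P.map (B t i'))
    (hmeanA : ∀ t i, ∫ ω, A t i ω ∂P = 0) (hmeanB : ∀ t i, ∫ ω, B t i ω ∂P = 0)
    (hintA : ∀ t i, ∀ η : ℝ, |η| ≤ ζ →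
      Integrable (fun ω => Real.exp (η * A t i ω)) P)
    (hintB : ∀ t i, ∀ η : ℝ, |η| ≤ ζ →
      Integrable (fun ω => Real.exp (η * B t i ω)) P)
    (hmgfA : ∀ t i, ∀ η : ℝ, |η| ≤ ζ →
      ∫ ω, Real.exp (η * A t i ω) ∂P ≤ Real.exp (σ ^ 2 * η ^ 2 / 2))
    (hmgfB : ∀ t i, ∀ η : ℝ, |η| ≤ ζ →
      ∫ ω, Real.exp (η * B t i ω) ∂P ≤ Real.exp (σ ^ 2 * η ^ 2 / 2))
    (Lt : Ω → (Fin (p - 1) → ℝ) → ℝ)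
    (hconv : ∀ ω, ConvexOn ℝ Set.univ (Lt ω))
    (hsmooth : ∀ ω, ContDiff ℝ 2 (Lt ω))
    (hgrad : ∀ ω t, fderiv ℝ (Lt ω) θstar (Pi.single t 1) =
      (1 / n : ℝ) * ∑ i, (-(A t i ω) + B t i ω))
    (hRSC : ∀ ω, ∀ θ : Fin (p - 1) → ℝ,
      Real.sqrt (∑ t, (θ t - θstar t) ^ 2) < rt →
      ∀ v : Fin (p - 1) → ℝ, (∑ t ∈ Sᶜ, |v t|) ≤ 3 * ∑ t ∈ S, |v t| →
        βt * ∑ t, (v t) ^ 2 ≤ fderiv ℝ (fderiv ℝ (Lt ω)) θ v v)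
    (γn : Ω → ℝ) (hγn : ∀ ω, γn ω = ⨆ t, |fderiv ℝ (Lt ω) θstar (Pi.single t 1)|)
    (lam : Ω → ℝ) (hlam_pos : ∀ ω, 0 < lam ω)
    (hlam : ∀ ω, 2 * γn ω ≤ lam ω ∧ lam ω ≤ c₀ * γn ω)
    (θhat : Ω → Fin (p - 1) → ℝ)
    (hmin : ∀ ω θ, Lt ω (θhat ω) + lam ω * ∑ t, |θhat ω t| ≤
      Lt ω θ + lam ω * ∑ t, |θ t|)
    (hn1 : 6 * Real.log p / (σ ^ 2 * ζ ^ 2) < n)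
    (hn2 : 54 * c₀ ^ 2 * rt⁻¹ ^ 2 * βt⁻¹ ^ 2 * σ ^ 2 * s₀ * Real.log p < n) :
    1 - 4 * ((p : ENNReal) ^ 2)⁻¹ ≤
      P {ω | Real.sqrt (∑ t, (θhat ω t - θstar t) ^ 2) ≤
        3 * c₀ * βt⁻¹ * σ * Real.sqrt (6 * s₀ * Real.log p / n)} :=
  stmt_15_general P p n hp hn σ ζ rt βt c₀ hσ hζ hrt hβt hc₀ θstar S hS s₀ hs₀def A B hmeasA hmeasB
    hindepA hindepB hintA hintB hmgfA hmgfB Lt hconv hsmooth hgrad hRSC γn hγn lam hlam_pos hlam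
    θhat hmin hn1 hn2
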